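/- arXiv:2601.14846 — 5 statements merged into one kernel-verified Lean document; each statement's English description precedes it below -/
import Mathlib

section
/- Let X be a measurable space, P ⊆ X an arbitrary subset, and β, β' ∈ ℝ≥0∞. Let ζ be a probability measure on the space Measure X of measures on X such that ζ-almost every ν is a probability measure, and such that for every measurable set M ⊆ Measure X with UB_{β'}(P) ⊆ M one has ζ(Mᶜ) ≤ β. Then the join μ := Measure.join ζ (given by μ(A) = ∫⁻ ν(A) dζ(ν)) satisfies: for every measurable set B ⊆ X with P ⊆ B, μ(Bᶜ) ≤ β + β'. That is, the join of a distribution that fails UB_{β'}(P) with probability at most β lies in UB_{β+β'}(P); this is the graded multiplication law of the union-bound graded monad lifting. -/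
open MeasureTheory ENNReal

/-- The union-bound lifting: the set of probability measures `μ` on `X` such that
for every measurable `B ⊇ P`, the failure probability `μ Bᶜ` is at most `β`. -/
def UB {X : Type*} [MeasurableSpace X] (β : ℝ≥0∞) (P : Set X) : Set (Measure X) :=
  {μ | IsProbabilityMeasure μ ∧ ∀ B : Set X, MeasurableSet B → P ⊆ B → μ Bᶜ ≤ β}

/-- multiplication law of the union-bound graded monad lifting:
if `ζ` is a probability measure on `Measure X` concentrated (a.e.) on probability
measures, and `ζ` assigns outer probability at most `β` to the complement of any
measurable superset of `UB β' P`, then `Measure.join ζ ∈ UB (β + β') P`. -/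
theorem UB_join {X : Type*} [MeasurableSpace X] (P : Set X) (β β' : ℝ≥0∞)
    (ζ : Measure (Measure X)) [IsProbabilityMeasure ζ]
    (hprob : ∀ᵐ ν ∂ζ, IsProbabilityMeasure ν)
    (hfail : ∀ M : Set (Measure X), MeasurableSet M → UB β' P ⊆ M → ζ Mᶜ ≤ β) :
    ∀ B : Set X, MeasurableSet B → P ⊆ B → ζ.join Bᶜ ≤ β + β' := by
  intro B hB hPB
  rw [Measure.join_apply hB.compl]
  set M := {ν : Measure X | ν Bᶜ ≤ β'} with hMdef
  have hM : MeasurableSet M :=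
    measurableSet_le (Measure.measurable_coe hB.compl) measurable_const
  have hζM : ζ Mᶜ ≤ β := hfail M hM (fun μ hμ => hμ.2 B hB hPB)
  have key : ∫⁻ ν, ν Bᶜ ∂ζ ≤
      ∫⁻ ν, (M.indicator (fun _ => β') ν + Mᶜ.indicator (fun _ => 1) ν) ∂ζ := by
    apply lintegral_mono_ae
    filter_upwards [hprob] with ν hν
    by_cases h : ν ∈ M
    · have h' : ν ∉ Mᶜ := by simpa using h
      simp only [Set.indicator_of_mem h, Set.indicator_of_notMem h', add_zero]
      exact h
    · have h' : ν ∈ Mᶜ := h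
      simp only [Set.indicator_of_notMem h, Set.indicator_of_mem h', zero_add]
      haveI := hν
      exact prob_le_one
  have eq1 : ∫⁻ ν, (M.indicator (fun _ => β') ν + Mᶜ.indicator (fun _ => 1) ν) ∂ζ
      = β' * ζ M + 1 * ζ Mᶜ := by
    rw [lintegral_add_left ((measurable_const (a := β')).indicator hM),
      lintegral_indicator_const hM, lintegral_indicator_const hM.compl]
  refine le_trans key ?_
  rw [eq1, one_mul]
  calc β' * ζ M + ζ Mᶜ ≤ β' * 1 + β :=
        add_le_add (by gcongr; exact prob_le_one) hζM
      _ = β + β' := by rw [mul_one, add_comm]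
end

section
/- Let X and Y be measurable spaces, f : X → Y a measurable function, P ⊆ X and P' ⊆ Y arbitrary subsets with f(P) ⊆ P', and β ∈ ℝ≥0∞. If μ ∈ UB_β(P) then the pushforward measure Measure.map f μ lies in UB_β(P'): for every measurable set B ⊆ Y with P' ⊆ B, (Measure.map f μ)(Bᶜ) ≤ β. This is the functoriality law of the union-bound graded monad lifting. -/
open MeasureTheory ENNReal

/-- functoriality law of the union-bound graded monad lifting: if
`f : X → Y` is measurable with `f '' P ⊆ P'` and `μ ∈ UB β P`, then
`Measure.map f μ ∈ UB β P'`. -/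
theorem UB_map {X Y : Type*} [MeasurableSpace X] [MeasurableSpace Y]
    (f : X → Y) (hf : Measurable f) (P : Set X) (P' : Set Y) (hP : f '' P ⊆ P')
    (β : ℝ≥0∞) (μ : Measure X) (hμ : μ ∈ UB β P) :
    ∀ B : Set Y, MeasurableSet B → P' ⊆ B → (Measure.map f μ) Bᶜ ≤ β := by
  intro B hB hPB
  rw [Measure.map_apply hf hB.compl, Set.preimage_compl]
  exact hμ.2 _ (hf hB) fun x hx => hPB (hP ⟨x, hx, rfl⟩)
end

section
/- Define leq : List ℝ → List ℝ → Bool by: leq [] l₂ = true; leq (a :: l₁) [] = false; leq (a :: l₁) (b :: l₂) = (decide (a ≤ b)) && leq l₁ l₂; and leqCost : List ℝ → List ℝ → ℕ by: leqCost [] l₂ = 0; leqCost (a :: l₁) [] = 0; leqCost (a :: l₁) (b :: l₂) = 1 + leqCost l₁ l₂. Define insertCost : List ℝ → List (List ℝ) → ℕ by: insertCost x [] = 0; insertCost x (h :: t) = 1 + leqCost x h + (if leq x h then 0 else insertCost x t). Then for every x : List ℝ and every l : List (List ℝ), insertCost x l ≤ (x.length + 1) * l.length. -/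
/-- Lexicographic-style comparison of lists of reals from the insertion-sort
example. -/
noncomputable def leq : List ℝ → List ℝ → Bool
  | [], _ => true
  | _ :: _, [] => false
  | a :: l₁, b :: l₂ => (decide (a ≤ b)) && leq l₁ l₂

/-- The cost (number of `Tick`s) of `leq`. -/
def leqCost : List ℝ → List ℝ → ℕ
  | [], _ => 0
  | _ :: _, [] => 0
  | _ :: l₁, _ :: l₂ => 1 + leqCost l₁ l₂

/-- The cost (number of `Tick`s) of the insertion function `insert` for
insertion sort on lists of lists. -/
noncomputable def insertCost : List ℝ → List (List ℝ) → ℕ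
  | _, [] => 0
  | x, h :: t => 1 + leqCost x h + (if leq x h then 0 else insertCost x t)

lemma leqCost_le (x y : List ℝ) : leqCost x y ≤ x.length := by
  induction x generalizing y with
  | nil => simp [leqCost]
  | cons a l ih =>
    cases y with
    | nil => simp [leqCost]
    | cons b m => simp [leqCost, Nat.add_comm 1]; exact ih m

/-- the cost of `insert` is bounded by `(len x + 1) · len l`. -/
theorem insertCost_le (x : List ℝ) (l : List (List ℝ)) :
    insertCost x l ≤ (x.length + 1) * l.length := by
  induction l with
  | nil => simp [insertCost]
  | cons h t ih =>
    simp only [insertCost, List.length_cons, Nat.mul_succ]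
    have h1 := leqCost_le x h
    split <;> omega
end

section
/- Let Σ be a type and X an ω-complete partial order, i.e., a partial order in which every ω-chain (monotone sequence indexed by ℕ) has a least upper bound. Let W := (List Σ × X) ⊕ List Σ ⊕ (ℕ → Σ), and define a relation ⊑ on W by: inl (s, x) ⊑ inl (t, y) iff s = t and x ≤ y; for finite words s, t in the middle summand, s ⊑ t iff s is a prefix of t; a finite word s in the middle summand satisfies s ⊑ inl (t, y) iff s is a prefix of t; a finite word s in the middle summand satisfies s ⊑ w for an infinite word w : ℕ → Σ iff s is a prefix of w (s.get i = w i for all i < s.length); two infinite words w, w' satisfy w ⊑ w' iff w = w'; and no other pairs are related. Then ⊑ is a partial order on W whose least element is the empty finite word in the middle summand, and every ω-chain in (W, ⊑) has a least upper bound. -/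
/-- The carrier of the free algebra `Wr^⊥ X`: terminating computations with a
finite event word and a result, diverging computations with a finite event word,
and diverging computations with an infinite event word. -/
def Wr (σ X : Type*) : Type _ := (List σ × X) ⊕ (List σ ⊕ (ℕ → σ))

/-- A finite word is a prefix of an infinite word. -/
def IsPrefixOfInf {σ : Type*} (s : List σ) (w : ℕ → σ) : Prop :=
  ∀ (i : ℕ) (h : i < s.length), s.get ⟨i, h⟩ = w i

/-- The order `⊑` on `Wr σ X`. -/
def wrLE {σ X : Type*} [PartialOrder X] : Wr σ X → Wr σ X → Prop
  | Sum.inl (s, x), Sum.inl (t, y) => s = t ∧ x ≤ y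
  | Sum.inr (Sum.inl s), Sum.inl (t, _) => s <+: t
  | Sum.inr (Sum.inl s), Sum.inr (Sum.inl t) => s <+: t
  | Sum.inr (Sum.inl s), Sum.inr (Sum.inr w) => IsPrefixOfInf s w
  | Sum.inr (Sum.inr w), Sum.inr (Sum.inr w') => w = w'
  | _, _ => False

section Aux
variable {σ : Type*}

lemma isPrefixOfInf_of_prefix {s t : List σ} {w : ℕ → σ}
    (h : s <+: t) (ht : IsPrefixOfInf t w) : IsPrefixOfInf s w := by
  intro i hi
  have := ht i (hi.trans_le h.length_le)
  rw [← this]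
  simpa using List.IsPrefix.getElem h hi

end Aux

/-- if every ω-chain in the partial order `X` has a least upper
bound, then `⊑` is a partial order on `Wr σ X` (reflexive, antisymmetric,
transitive), the empty finite word of the middle summand is its least element,
and every ω-chain in `(Wr σ X, ⊑)` has a least upper bound. -/
theorem wr_omegaCPPO {σ X : Type*} [PartialOrder X]
    (hX : ∀ g : ℕ → X, Monotone g →
      ∃ l : X, (∀ n, g n ≤ l) ∧ ∀ u : X, (∀ n, g n ≤ u) → l ≤ u) :
    (∀ w : Wr σ X, wrLE w w) ∧
    (∀ a b : Wr σ X, wrLE a b → wrLE b a → a = b) ∧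
    (∀ a b c : Wr σ X, wrLE a b → wrLE b c → wrLE a c) ∧
    (∀ w : Wr σ X, wrLE (Sum.inr (Sum.inl ([] : List σ))) w) ∧
    (∀ f : ℕ → Wr σ X, (∀ i j : ℕ, i ≤ j → wrLE (f i) (f j)) →
      ∃ l : Wr σ X, (∀ n, wrLE (f n) l) ∧
        ∀ u : Wr σ X, (∀ n, wrLE (f n) u) → wrLE l u) := by
  have refl : ∀ w : Wr σ X, wrLE w w := by
    rintro (⟨s, x⟩ | s | w)
    · exact ⟨rfl, le_refl x⟩
    · exact List.prefix_refl s
    · rfl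
  have antisymm : ∀ a b : Wr σ X, wrLE a b → wrLE b a → a = b := by
    rintro (⟨s, x⟩ | s | w) (⟨t, y⟩ | t | w') h1 h2 <;>
      first
      | exact absurd h1 not_false
      | exact absurd h2 not_false
      | skip
    · obtain ⟨rfl, hxy⟩ := h1
      obtain ⟨-, hyx⟩ := h2
      exact congrArg Sum.inl (Prod.ext rfl (le_antisymm hxy hyx))
    · exact congrArg (Sum.inr ∘ Sum.inl)
        (h1.eq_of_length (le_antisymm h1.length_le h2.length_le))
    · exact congrArg (Sum.inr ∘ Sum.inr) h1
  have trans : ∀ a b c : Wr σ X, wrLE a b → wrLE b c → wrLE a c := by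
    rintro (⟨s, x⟩ | s | w) (⟨t, y⟩ | t | w') (⟨r, z⟩ | r | w'') h1 h2 <;>
      first
      | exact absurd h1 not_false
      | exact absurd h2 not_false
      | skip
    · exact ⟨h1.1.trans h2.1, h1.2.trans h2.2⟩
    · exact h1.trans ((show t = r from h2.1) ▸ List.prefix_refl t)
    · exact h1.trans h2
    · exact h1.trans h2
    · exact isPrefixOfInf_of_prefix h1 h2
    · exact h2 ▸ h1
    · exact h1.trans h2
  refine ⟨refl, antisymm, trans, ?_, ?_⟩
  · rintro (⟨s, x⟩ | s | w)
    · exact List.nil_prefix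
    · exact List.nil_prefix
    · intro i h; simp at h
  · intro f hf
    by_cases hterm : ∃ n s x, f n = (Sum.inl (s, x) : Wr σ X)
    · -- case: eventually in the terminating summand
      obtain ⟨n₀, s, x, hn₀⟩ := hterm
      have hform : ∀ m, ∃ y : X, f (n₀ + m) = Sum.inl (s, y) := by
        intro m
        have h := hf n₀ (n₀ + m) (Nat.le_add_right _ _)
        rw [hn₀] at h
        rcases hm : f (n₀ + m) with ⟨t, y⟩ | t | w
        · rw [hm] at h; exact ⟨y, by rw [h.1]⟩
        · rw [hm] at h; exact absurd h not_false
        · rw [hm] at h; exact absurd h not_false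
      choose g hg using hform
      have hgmono : Monotone g := by
        intro i j hij
        have h := hf (n₀ + i) (n₀ + j) (by omega)
        rw [hg i, hg j] at h
        exact h.2
      obtain ⟨l, hl, hlub⟩ := hX g hgmono
      refine ⟨Sum.inl (s, l), ?_, ?_⟩
      · intro n
        rcases le_or_gt n₀ n with h | h
        · obtain ⟨m, rfl⟩ := Nat.exists_eq_add_of_le h
          rw [hg m]; exact ⟨rfl, hl m⟩
        · refine trans _ (f n₀) _ (hf n n₀ h.le) ?_
          rw [hn₀]
          have h0 : f (n₀ + 0) = Sum.inl (s, g 0) := hg 0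
          rw [Nat.add_zero, hn₀] at h0
          obtain rfl : x = g 0 := by
            injection h0 with h0; injection h0
          exact ⟨rfl, hl 0⟩
      · rintro (⟨t, y⟩ | t | w) hu
        · have h0 := hu n₀
          rw [hn₀] at h0
          obtain ⟨rfl, -⟩ := h0
          refine ⟨rfl, hlub y ?_⟩
          intro m
          have := hu (n₀ + m)
          rw [hg m] at this
          exact this.2
        · have h0 := hu n₀; rw [hn₀] at h0; exact absurd h0 not_false
        · have h0 := hu n₀; rw [hn₀] at h0; exact absurd h0 not_false
    · by_cases hinf : ∃ n w, f n = (Sum.inr (Sum.inr w) : Wr σ X)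
      · -- case: eventually an infinite word
        obtain ⟨n₀, w, hn₀⟩ := hinf
        refine ⟨Sum.inr (Sum.inr w), ?_, ?_⟩
        · intro n
          rcases le_or_gt n₀ n with h | h
          · have h' := hf n₀ n h
            rw [hn₀] at h'
            rcases hn : f n with ⟨t, y⟩ | t | w'
            · rw [hn] at h'; exact absurd h' not_false
            · rw [hn] at h'; exact absurd h' not_false
            · rw [hn] at h'
              exact h' ▸ (rfl : wrLE (Sum.inr (Sum.inr w') : Wr σ X) (Sum.inr (Sum.inr w')))
          · exact trans _ (f n₀) _ (hf n n₀ h.le) (hn₀ ▸ refl _)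
        · intro u hu
          have h0 := hu n₀
          rw [hn₀] at h0
          rcases u with ⟨t, y⟩ | t | w'
          · exact absurd h0 not_false
          · exact absurd h0 not_false
          · exact h0
      · -- case: all finite words
        have hterm' : ∀ n s x, f n ≠ (Sum.inl (s, x) : Wr σ X) :=
          fun n s x h => hterm ⟨n, s, x, h⟩
        have hinf' : ∀ n w, f n ≠ (Sum.inr (Sum.inr w) : Wr σ X) :=
          fun n w h => hinf ⟨n, w, h⟩
        have hform : ∀ n, ∃ s : List σ, f n = Sum.inr (Sum.inl s) := by
          intro n
          rcases hn : f n with ⟨t, y⟩ | t | w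
          · exact absurd hn (hterm' n t y)
          · exact ⟨t, rfl⟩
          · exact absurd hn (hinf' n w)
        choose s hs using hform
        have hchain : ∀ n m, n ≤ m → s n <+: s m := by
          intro n m hnm
          have h := hf n m hnm
          rwa [hs n, hs m] at h
        by_cases hb : ∀ k : ℕ, ∃ n, k < (s n).length
        · -- unbounded: limit is an infinite word
          choose idx hidx using hb
          set w : ℕ → σ := fun i => (s (idx i)).get ⟨i, hidx i⟩ with hw
          have hkey : ∀ n i (hi : i < (s n).length), (s n).get ⟨i, hi⟩ = w i := by
            intro n i hi
            rcases le_total n (idx i) with h | h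
            · have := List.IsPrefix.getElem (hchain n (idx i) h) hi
              simpa [hw] using this
            · have := List.IsPrefix.getElem (hchain (idx i) n h) (hidx i)
              simpa [hw] using this.symm
          refine ⟨Sum.inr (Sum.inr w), ?_, ?_⟩
          · intro n
            rw [hs n]
            exact fun i hi => hkey n i hi
          · rintro (⟨t, y⟩ | t | w') hu
            · have hn := hidx t.length
              have := hu (idx t.length)
              rw [hs _] at this
              exact absurd hn (not_lt.2 ((this : s _ <+: t).length_le))
            · have hn := hidx t.length
              have := hu (idx t.length)
              rw [hs _] at this
              exact absurd hn (not_lt.2 ((this : s _ <+: t).length_le))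
            · show w = w'
              funext i
              have := hu (idx i)
              rw [hs (idx i)] at this
              exact (hkey (idx i) i (hidx i)).symm.trans (this i (hidx i))
        · -- bounded: eventually constant
          push_neg at hb
          obtain ⟨k, hk⟩ := hb
          have hne : (Set.range fun n => (s n).length).Nonempty := ⟨(s 0).length, 0, rfl⟩
          have hbdd : BddAbove (Set.range fun n => (s n).length) := ⟨k, by rintro _ ⟨n, rfl⟩; exact hk n⟩
          obtain ⟨N, hN⟩ := Nat.sSup_mem hne hbdd
          have hmax : ∀ n, (s n).length ≤ (s N).length := by
            intro n
            rw [show (s N).length = sSup (Set.range fun n => (s n).length) from hN]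
            exact le_csSup hbdd ⟨n, rfl⟩
          have hpre : ∀ n, s n <+: s N := by
            intro n
            rcases le_total n N with h | h
            · exact hchain n N h
            · have h' := hchain N n h
              rw [h'.eq_of_length (le_antisymm h'.length_le (hmax n))]
          refine ⟨Sum.inr (Sum.inl (s N)), ?_, ?_⟩
          · intro n
            rw [hs n]
            exact hpre n
          · intro u hu
            have := hu N
            rwa [hs N] at this
end

section
/- Let Σ be a type, X an ω-complete partial order, and (W, ⊑) the ω-complete pointed partial order defined from them as above. Let L be a set of lists over Σ (a language) and let P ⊆ X be a subset that is closed under least upper bounds of ω-chains of X. Define TS_L(P) := {inl (s, x) | s ∈ L and x ∈ P} ∪ {every element of the middle summand List Σ} ∪ {every element of the infinite-word summand ℕ → Σ} ⊆ W. Then TS_L(P) contains the least element of W and is closed under least upper bounds of ω-chains of W; i.e., TS_L(P) is admissible. -/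
/-- The graded monad lifting for temporal safety: a terminating computation must
emit a word in `L` and return a value in `P`; diverging computations are always
accepted (partial correctness). -/
def TS {σ X : Type*} (L : Set (List σ)) (P : Set X) : Set (Wr σ X) :=
  {w | match w with
       | Sum.inl (s, x) => s ∈ L ∧ x ∈ P
       | Sum.inr _ => True}

/-- if `P ⊆ X` is closed under least upper bounds of ω-chains of
`X`, then `TS L P` contains the least element of `Wr σ X` and is closed under
least upper bounds of ω-chains of `Wr σ X`; i.e., `TS L P` is admissible. -/
theorem TS_admissible {σ X : Type*} [PartialOrder X]
    (L : Set (List σ)) (P : Set X)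
    (hP : ∀ g : ℕ → X, Monotone g → (∀ n, g n ∈ P) →
      ∀ l : X, IsLUB (Set.range g) l → l ∈ P) :
    (Sum.inr (Sum.inl ([] : List σ)) : Wr σ X) ∈ TS L P ∧
    (∀ f : ℕ → Wr σ X, (∀ i j : ℕ, i ≤ j → wrLE (f i) (f j)) →
      (∀ n, f n ∈ TS L P) →
      ∀ l : Wr σ X, (∀ n, wrLE (f n) l) →
        (∀ u : Wr σ X, (∀ n, wrLE (f n) u) → wrLE l u) →
        l ∈ TS L P) := by
  constructor
  · trivial
  · intro f hchain hmem l hub hlub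
    rcases hl : l with ⟨t, y⟩ | z
    · subst hl
      by_cases h : ∃ N x, f N = Sum.inl (t, x)
      · obtain ⟨N, x0, hN⟩ := h
        have key : ∀ n : ℕ, ∃ x : X, f (N + n) = Sum.inl (t, x) := by
          intro n
          have hc : wrLE (f N) (f (N + n)) := hchain N (N + n) (Nat.le_add_right _ _)
          rw [hN] at hc
          rcases hfn : f (N + n) with ⟨s, x⟩ | z'
          · have hu : wrLE (f (N + n)) (Sum.inl (t, y)) := hub (N + n)
            rw [hfn] at hu
            exact ⟨x, by rw [hu.1]⟩
          · rw [hfn] at hc; rcases z' with _ | _ <;> exact absurd hc (by simp [wrLE])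
        choose g hg using key
        have hmono : Monotone g := by
          intro m n hmn
          have hc : wrLE (f (N + m)) (f (N + n)) :=
            hchain _ _ (Nat.add_le_add_left hmn N)
          rw [hg m, hg n] at hc
          exact hc.2
        have hgP : ∀ n, g n ∈ P := by
          intro n
          have := hmem (N + n)
          rw [hg n] at this
          exact this.2
        have hyub : y ∈ upperBounds (Set.range g) := by
          rintro _ ⟨n, rfl⟩
          have hu : wrLE (f (N + n)) (Sum.inl (t, y)) := hub (N + n)
          rw [hg n] at hu
          exact hu.2
        have hlb : ∀ b ∈ upperBounds (Set.range g), y ≤ b := by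
          intro b hb
          have hu : ∀ n, wrLE (f n) (Sum.inl (t, b) : Wr σ X) := by
            intro n
            rcases hfn : f n with ⟨s, x⟩ | (s | w)
            · have h1 : wrLE (f n) (Sum.inl (t, y)) := hub n
              rw [hfn] at h1
              have h2 : wrLE (f n) (f (N + n)) := hchain _ _ (Nat.le_add_left _ _)
              rw [hfn, hg n] at h2
              exact ⟨h1.1, h2.2.trans (hb ⟨n, rfl⟩)⟩
            · have h1 : wrLE (f n) (Sum.inl (t, y)) := hub n
              rw [hfn] at h1
              exact h1
            · have h1 : wrLE (f n) (Sum.inl (t, y)) := hub n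
              rw [hfn] at h1
              exact absurd h1 (by simp [wrLE])
          exact (hlub _ hu).2
        have hyP : y ∈ P := hP g hmono hgP y ⟨hyub, hlb⟩
        have htL : t ∈ L := by
          have := hmem N
          rw [hN] at this
          exact this.1
        exact ⟨htL, hyP⟩
      · exfalso
        have hu : ∀ n, wrLE (f n) (Sum.inr (Sum.inl t) : Wr σ X) := by
          intro n
          rcases hfn : f n with ⟨s, x⟩ | (s | w)
          · have h1 : wrLE (f n) (Sum.inl (t, y)) := hub n
            rw [hfn] at h1
            exact absurd hfn (by rw [h1.1]; exact fun e => h ⟨n, x, e⟩)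
          · have h1 : wrLE (f n) (Sum.inl (t, y)) := hub n
            rw [hfn] at h1
            exact h1
          · have h1 : wrLE (f n) (Sum.inl (t, y)) := hub n
            rw [hfn] at h1
            exact absurd h1 (by simp [wrLE])
        exact hlub _ hu
    · trivial
end
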